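/- Under the MMSB setup, define b_1 = 1/√(𝟏'(V_{*,1}(𝓘,:) V_{*,1}(𝓘,:)')^{-1}𝟏) and w_1 = b_1^{-1} V_{*,1}(𝓘,:)' (V_{*,1}(𝓘,:) V_{*,1}(𝓘,:)')^{-1}𝟏 / (𝟏'(V_{*,1}(𝓘,:) V_{*,1}(𝓘,:)')^{-1}𝟏). Then for every node i: if node i is pure (Π(i,k) = 1 for some k), then V_{*,1}(i,:) w_1 = b_1; and if node i is not pure, then V_{*,1}(i,:) w_1 ≠ b_1. -/

import Mathlib

open Matrix BigOperators

noncomputable def rowNorm {m k : ℕ} (M : Matrix (Fin m) (Fin k) ℝ) (i : Fin m) : ℝ :=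
  Real.sqrt (∑ j, (M i j) ^ 2)

/-!
The eigen-equation `𝓛_τ V = V E` shows `V = 𝒟_τ^{-1/2} Π B` for some `K × K` matrix `B`, so after
row normalisation every row of `V_{*,1}` is a combination `∑ₖ cₖ rₖ` of the pure rows
`rₖ = V_{*,1}(𝓘ₖ,:)` with `cₖ ≥ 0`, and `cₖ > 0` exactly where `Π(i,k) > 0`. The vector `w₁` is
built so that `rₖ ⬝ w₁ = b₁` for every `k`, hence `V_{*,1}(i,:) ⬝ w₁ = b₁ ∑ₖ cₖ`, and it remains to
decide when `∑ₖ cₖ = 1`. For a pure node the row is a positive multiple of a single unit vector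
`rₖ`, so the coefficient is `1`. For a mixed node, `∑ₖ cₖ = 1` would make a unit vector a proper
convex combination of two distinct unit vectors, which strict convexity of the Euclidean ball
forbids.
-/

section UnitVectors

variable {𝕜 m ι : Type*} [Field 𝕜] [Fintype m] [Fintype ι]

theorem dotProduct_sub_self_of_unit {u v : m → 𝕜} (hu : u ⬝ᵥ u = 1) (hv : v ⬝ᵥ v = 1) :
    (u - v) ⬝ᵥ (u - v) = 2 - 2 * (u ⬝ᵥ v) := by
  rw [sub_dotProduct, dotProduct_sub, dotProduct_sub, hu, hv, dotProduct_comm v u]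
  ring

theorem sum_sum_mul_dotProduct_sub_self {r : ι → m → 𝕜} {c : ι → 𝕜}
    (hr : ∀ k, r k ⬝ᵥ r k = 1) (hc : ∑ k, c k = 1) :
    ∑ k, ∑ l, c k * c l * ((r k - r l) ⬝ᵥ (r k - r l)) =
      2 - 2 * ((∑ k, c k • r k) ⬝ᵥ ∑ k, c k • r k) := by
  have hcc : ∑ k, ∑ l, c k * c l = 1 := by rw [← Finset.sum_mul_sum, hc, one_mul]
  simp only [dotProduct_sub_self_of_unit (hr _) (hr _), sum_dotProduct, dotProduct_sum,
    smul_dotProduct, dotProduct_smul, smul_eq_mul, mul_sub, Finset.sum_sub_distrib,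
    Finset.mul_sum, ← Finset.sum_mul, hcc]
  rw [one_mul, Finset.sum_comm]
  congr 1
  exact Finset.sum_congr rfl fun _ _ => Finset.sum_congr rfl fun _ _ => by ring

variable [LinearOrder 𝕜] [IsStrictOrderedRing 𝕜] in
theorem eq_of_sum_smul_dotProduct_self_eq_one {r : ι → m → 𝕜} {c : ι → 𝕜}
    (hr : ∀ k, r k ⬝ᵥ r k = 1) (hc0 : ∀ k, 0 ≤ c k) (hc : ∑ k, c k = 1)
    (hx : (∑ k, c k • r k) ⬝ᵥ (∑ k, c k • r k) = 1) {k l : ι} (hk : 0 < c k) (hl : 0 < c l) :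
    r k = r l := by
  have hterm_nonneg : ∀ k l, 0 ≤ c k * c l * ((r k - r l) ⬝ᵥ (r k - r l)) := fun k l =>
    mul_nonneg (mul_nonneg (hc0 k) (hc0 l)) (Fintype.sum_nonneg fun _ => mul_self_nonneg _)
  have hsum : ∑ k, ∑ l, c k * c l * ((r k - r l) ⬝ᵥ (r k - r l)) = 0 := by
    rw [sum_sum_mul_dotProduct_sub_self hr hc, hx]; ring
  have hkl := (Finset.sum_eq_zero_iff_of_nonneg fun l _ => hterm_nonneg k l).1
    ((Finset.sum_eq_zero_iff_of_nonneg fun k _ =>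
      Finset.sum_nonneg fun l _ => hterm_nonneg k l).1 hsum k (Finset.mem_univ k)) l
    (Finset.mem_univ l)
  rwa [mul_eq_zero, or_iff_right (mul_pos hk hl).ne', dotProduct_self_eq_zero, sub_eq_zero] at hkl

end UnitVectors

section ProbabilityVectors

variable {𝕜 ι : Type*} [Field 𝕜] [LinearOrder 𝕜] [IsStrictOrderedRing 𝕜] [Fintype ι]
  {p : ι → 𝕜}

theorem eq_single_of_sum_eq_one [DecidableEq ι] (hp0 : ∀ k, 0 ≤ p k) (hp : ∑ k, p k = 1) {k : ι}
    (hk : p k = 1) : p = Pi.single k 1 := by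
  funext l
  rcases eq_or_ne l k with rfl | hlk
  · simp [hk]
  · have hpair : p l + p k ≤ 1 := by
      rw [← Finset.sum_pair hlk, ← hp]
      exact Finset.sum_le_sum_of_subset_of_nonneg (Finset.subset_univ _) fun j _ _ => hp0 j
    simp only [Pi.single_apply, hlk, if_false]
    linarith [hp0 l]

theorem exists_ne_pos_pos_of_sum_eq_one (hp0 : ∀ k, 0 ≤ p k) (hp : ∑ k, p k = 1)
    (hmix : ¬ ∃ k, p k = 1) : ∃ k l, k ≠ l ∧ 0 < p k ∧ 0 < p l := by
  classical
  obtain ⟨k, -, hk⟩ := Finset.exists_ne_zero_of_sum_ne_zero (hp ▸ one_ne_zero : ∑ k, p k ≠ 0)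
  have hrest : ∑ l ∈ Finset.univ.erase k, p l ≠ 0 := by
    rw [Finset.sum_erase_eq_sub (Finset.mem_univ k), hp, sub_ne_zero]
    exact fun h => hmix ⟨k, h.symm⟩
  obtain ⟨l, hl, hl0⟩ := Finset.exists_ne_zero_of_sum_ne_zero hrest
  exact ⟨k, l, (Finset.ne_of_mem_erase hl).symm, (hp0 k).lt_of_ne' hk, (hp0 l).lt_of_ne' hl0⟩

end ProbabilityVectors

theorem sum_mul_eq_one_iff_exists_eq_one {𝕜 m ι : Type*} [Field 𝕜] [LinearOrder 𝕜]
    [IsStrictOrderedRing 𝕜] [Fintype m] [Fintype ι] {r : ι → m → 𝕜}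
    (hr : ∀ k, r k ⬝ᵥ r k = 1) (hr_inj : Function.Injective r) {p a : ι → 𝕜}
    (hp0 : ∀ k, 0 ≤ p k) (hp : ∑ k, p k = 1) (ha : ∀ k, 0 < a k)
    (hx : (∑ k, (p k * a k) • r k) ⬝ᵥ (∑ k, (p k * a k) • r k) = 1) :
    ∑ k, p k * a k = 1 ↔ ∃ k, p k = 1 := by
  classical
  constructor
  · intro hsum
    by_contra hmix
    obtain ⟨k, l, hkl, hk, hl⟩ := exists_ne_pos_pos_of_sum_eq_one hp0 hp hmix
    exact hkl (hr_inj (eq_of_sum_smul_dotProduct_self_eq_one hr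
      (fun k => mul_nonneg (hp0 k) (ha k).le) hsum hx (mul_pos hk (ha k)) (mul_pos hl (ha l))))
  · rintro ⟨k, hk⟩
    rw [eq_single_of_sum_eq_one hp0 hp hk] at hx ⊢
    simp only [Pi.single_apply, ite_mul, one_mul, zero_mul, ite_smul, zero_smul,
      Finset.sum_ite_eq', Finset.mem_univ, if_true, smul_dotProduct, dotProduct_smul, hr,
      smul_eq_mul, mul_one] at hx ⊢
    exact (mul_self_eq_one_iff.1 hx).resolve_right (by linarith [ha k])

theorem exists_eq_diagonal_mul_mul_of_eigenvectors {𝕜 n κ ι : Type*} [Field 𝕜] [Fintype n]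
    [Fintype κ] [Fintype ι] [DecidableEq n] [DecidableEq ι] {V : Matrix n ι 𝕜} {e : ι → 𝕜}
    (hV : Vᵀ * V = 1) (he : ∀ k, e k ≠ 0) {δ : n → 𝕜} {A : Matrix n κ 𝕜} {M : Matrix κ κ 𝕜}
    (h : diagonal δ * (A * M * Aᵀ) * diagonal δ = V * diagonal e * Vᵀ) :
    ∃ B : Matrix κ ι 𝕜, V = diagonal δ * (A * B) := by
  refine ⟨M * Aᵀ * diagonal δ * V * diagonal e⁻¹, ?_⟩
  have he_inv : diagonal e * diagonal e⁻¹ = 1 := by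
    rw [diagonal_mul_diagonal, ← diagonal_one]
    exact congrArg diagonal (funext fun k => mul_inv_cancel₀ (he k))
  calc V = V * diagonal e * (Vᵀ * V) * diagonal e⁻¹ := by
        rw [hV, Matrix.mul_one, Matrix.mul_assoc, he_inv, Matrix.mul_one]
    _ = diagonal δ * (A * M * Aᵀ) * diagonal δ * V * diagonal e⁻¹ := by
        rw [h]; simp only [Matrix.mul_assoc]
    _ = _ := by simp only [Matrix.mul_assoc]

theorem diagonal_mul_mul_row_eq_sum_smul {𝕜 n ι m : Type*} [Field 𝕜] [Fintype n] [Fintype ι]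
    [DecidableEq n] [DecidableEq ι] {δ : n → 𝕜} {A : Matrix n ι 𝕜} (B : Matrix ι m 𝕜)
    {Idx : ι → n} (hIdx : A.submatrix Idx id = 1) (hδ : ∀ k, δ (Idx k) ≠ 0) (i : n) :
    (diagonal δ * (A * B)) i =
      ∑ k, (A i k * (δ i / δ (Idx k))) • (diagonal δ * (A * B)) (Idx k) := by
  have hpure : ∀ k, (diagonal δ * (A * B)) (Idx k) = δ (Idx k) • B k := by
    intro k
    ext j
    have hA : ∀ l, A (Idx k) l = (1 : Matrix ι ι 𝕜) k l := fun l => congrFun (congrFun hIdx k) l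
    rw [Pi.smul_apply, diagonal_mul, mul_apply]
    simp [hA, one_apply]
  ext j
  simp only [hpure, smul_smul, Finset.sum_apply, Pi.smul_apply, smul_eq_mul]
  rw [diagonal_mul, mul_apply, Finset.mul_sum]
  refine Finset.sum_congr rfl fun k _ => ?_
  field_simp [hδ k]

section Gram

variable {ι : Type*} [Fintype ι] [DecidableEq ι]

theorem mulVec_transpose_mulVec_inv_mul_transpose {𝕜 : Type*} [Field 𝕜] {R : Matrix ι ι 𝕜}
    (hR : IsUnit R) (v : ι → 𝕜) : R *ᵥ (Rᵀ *ᵥ ((R * Rᵀ)⁻¹ *ᵥ v)) = v := by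
  have hRRt : IsUnit (R * Rᵀ).det := by
    rw [det_mul, det_transpose]
    exact ((isUnit_iff_isUnit_det R).1 hR).mul ((isUnit_iff_isUnit_det R).1 hR)
  rw [mulVec_mulVec, mulVec_mulVec, mul_nonsing_inv _ hRRt, one_mulVec]

theorem one_dotProduct_inv_mul_transpose_mulVec_one_pos [Nonempty ι] {R : Matrix ι ι ℝ}
    (hR : IsUnit R) : 0 < (fun _ => (1 : ℝ)) ⬝ᵥ ((R * Rᵀ)⁻¹ *ᵥ fun _ => 1) := by
  have hpos : (R * Rᵀ)⁻¹.PosDef :=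
    (PosDef.mul_conjTranspose_self R (vecMul_injective_of_isUnit hR)).inv
  simpa using hpos.dotProduct_mulVec_pos (x := fun _ => (1 : ℝ))
    (Function.ne_iff.2 ⟨Classical.arbitrary ι, one_ne_zero⟩)

theorem mulVec_smul_transpose_mulVec_inv_mul_transpose_one {R : Matrix ι ι ℝ} (hR : IsUnit R)
    (s : ℝ) : R *ᵥ ((((Real.sqrt s)⁻¹)⁻¹ * s⁻¹) • (Rᵀ *ᵥ ((R * Rᵀ)⁻¹ *ᵥ fun _ => 1))) =
      fun _ => (Real.sqrt s)⁻¹ := by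
  rw [mulVec_smul, mulVec_transpose_mulVec_inv_mul_transpose hR, inv_inv, ← div_eq_mul_inv,
    Real.sqrt_div_self]
  ext
  simp

end Gram

section RowNorm

variable {m k : ℕ} {M : Matrix (Fin m) (Fin k) ℝ} {i : Fin m}

theorem rowNorm_pos (h : M i ≠ 0) : 0 < rowNorm M i := by
  obtain ⟨j, hj⟩ := Function.ne_iff.mp h
  exact Real.sqrt_pos.2 (Finset.sum_pos' (fun j _ => sq_nonneg _)
    ⟨j, Finset.mem_univ j, sq_pos_of_ne_zero hj⟩)

theorem dotProduct_self_div_rowNorm (h : M i ≠ 0) :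
    (fun j => M i j / rowNorm M i) ⬝ᵥ (fun j => M i j / rowNorm M i) = 1 := by
  have hsq : rowNorm M i ^ 2 = ∑ j, M i j ^ 2 :=
    Real.sq_sqrt (Finset.sum_nonneg fun j _ => sq_nonneg _)
  simp only [dotProduct, ← sq, div_pow, ← Finset.sum_div, ← hsq]
  exact div_self (pow_ne_zero 2 (rowNorm_pos h).ne')

theorem div_rowNorm_eq_diagonal_mul {δ : Fin m → ℝ} {X : Matrix (Fin m) (Fin k) ℝ}
    (hM : M = diagonal δ * X) {W : Matrix (Fin m) (Fin k) ℝ}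
    (hW : ∀ i j, W i j = M i j / rowNorm M i) :
    W = diagonal (fun i => δ i / rowNorm M i) * X := by
  subst hM
  ext i j
  rw [hW, diagonal_mul, diagonal_mul, div_mul_eq_mul_div]

end RowNorm

theorem stmt_13_general
    {n K : ℕ}
    (Pi : Matrix (Fin n) (Fin K) ℝ)
    (hPi_nonneg : ∀ i k, 0 ≤ Pi i k)
    (hPi_rowsum : ∀ i, ∑ k, Pi i k = 1)
    (Pt : Matrix (Fin K) (Fin K) ℝ)
    (ρ τ : ℝ)
    (Om : Matrix (Fin n) (Fin n) ℝ) (hOm : Om = Pi * (ρ • Pt) * Piᵀ)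
    (deg : Fin n → ℝ)
    (hpos : ∀ i, 0 < deg i + τ)
    (Ltau : Matrix (Fin n) (Fin n) ℝ)
    (hLtau : Ltau = Matrix.diagonal (fun i => (Real.sqrt (deg i + τ))⁻¹) * Om *
      Matrix.diagonal (fun i => (Real.sqrt (deg i + τ))⁻¹))
    (Idx : Fin K → Fin n) (hIdx : Pi.submatrix Idx id = 1)
    (V : Matrix (Fin n) (Fin K) ℝ) (e : Fin K → ℝ)
    (hVorth : Vᵀ * V = 1) (he : ∀ k, e k ≠ 0)
    (hVE : Ltau = V * Matrix.diagonal e * Vᵀ)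
    (hVrow : ∀ i, V i ≠ 0)
    (Vstar1 : Matrix (Fin n) (Fin K) ℝ)
    (hVstar1 : ∀ i k, Vstar1 i k = V i k / rowNorm V i)
    (hVstar1unit : IsUnit (Vstar1.submatrix Idx id))
    (s b1 : ℝ)
    (hs : s = (fun _ => (1 : ℝ)) ⬝ᵥ
      (((Vstar1.submatrix Idx id) * (Vstar1.submatrix Idx id)ᵀ)⁻¹ *ᵥ (fun _ => (1 : ℝ))))
    (hb1 : b1 = (Real.sqrt s)⁻¹)
    (w1 : Fin K → ℝ)
    (hw1 : w1 = (b1⁻¹ * s⁻¹) • ((Vstar1.submatrix Idx id)ᵀ *ᵥ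
      (((Vstar1.submatrix Idx id) * (Vstar1.submatrix Idx id)ᵀ)⁻¹ *ᵥ (fun _ => (1 : ℝ))))) :
    ∀ i : Fin n,
      ((∃ k, Pi i k = 1) → Vstar1 i ⬝ᵥ w1 = b1) ∧
      (¬ (∃ k, Pi i k = 1) → Vstar1 i ⬝ᵥ w1 ≠ b1) := by
  intro i
  have hunit : ∀ i, Vstar1 i ⬝ᵥ Vstar1 i = 1 := fun i => by
    simpa only [← hVstar1] using dotProduct_self_div_rowNorm (hVrow i)
  set δ : Fin n → ℝ := fun i => (Real.sqrt (deg i + τ))⁻¹ / rowNorm V i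
  have hδ : ∀ i, 0 < δ i := fun i =>
    div_pos (inv_pos.2 (Real.sqrt_pos.2 (hpos i))) (rowNorm_pos (hVrow i))
  obtain ⟨B, hVB⟩ := exists_eq_diagonal_mul_mul_of_eigenvectors hVorth he
    (by rw [← hOm, ← hLtau, hVE])
  have hrow : Vstar1 i = ∑ k, (Pi i k * (δ i / δ (Idx k))) • Vstar1 (Idx k) := by
    rw [div_rowNorm_eq_diagonal_mul hVB hVstar1]
    exact diagonal_mul_mul_row_eq_sum_smul B hIdx (fun k => (hδ _).ne') i
  have hpure_dot : ∀ k, Vstar1 (Idx k) ⬝ᵥ w1 = b1 := fun k => by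
    rw [hw1, hb1]
    exact congrFun (mulVec_smul_transpose_mulVec_inv_mul_transpose_one hVstar1unit s) k
  have hb1_ne : b1 ≠ 0 := by
    obtain ⟨k, -⟩ := Function.ne_iff.mp (hVrow i)
    have : Nonempty (Fin K) := ⟨k⟩
    rw [hb1, hs]
    exact inv_ne_zero (Real.sqrt_ne_zero'.2
      (one_dotProduct_inv_mul_transpose_mulVec_one_pos hVstar1unit))
  have hpure_iff : Vstar1 i ⬝ᵥ w1 = b1 ↔ ∃ k, Pi i k = 1 := by
    rw [hrow, sum_dotProduct]
    simp only [smul_dotProduct, hpure_dot, smul_eq_mul, ← Finset.sum_mul, mul_eq_right₀ hb1_ne]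
    exact sum_mul_eq_one_iff_exists_eq_one (fun k => hunit _)
      (linearIndependent_rows_iff_isUnit.2 hVstar1unit).injective (hPi_nonneg i)
      (hPi_rowsum i) (fun k => div_pos (hδ i) (hδ _)) (hrow ▸ hunit i)
  exact ⟨hpure_iff.2, mt hpure_iff.1⟩

/-- Lemma E.1: with `b₁ = 1/√(𝟏'(V_{*,1}(𝓘,:)V_{*,1}(𝓘,:)')⁻¹𝟏)` and
`w₁ = b₁⁻¹ V_{*,1}(𝓘,:)' (V_{*,1}(𝓘,:)V_{*,1}(𝓘,:)')⁻¹𝟏 / (𝟏'(V_{*,1}(𝓘,:)V_{*,1}(𝓘,:)')⁻¹𝟏)`,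
a node `i` satisfies `V_{*,1}(i,:) w₁ = b₁` if and only if it is pure. -/
theorem stmt_13
    {n K : ℕ} (hn : 0 < n) (hK : 0 < K) (hKn : K ≤ n)
    (Pi : Matrix (Fin n) (Fin K) ℝ)
    (hPi_nonneg : ∀ i k, 0 ≤ Pi i k)
    (hPi_rowsum : ∀ i, ∑ k, Pi i k = 1)
    (hPi_rank : Pi.rank = K)
    (hpure : ∀ k : Fin K, ∃ i : Fin n, ∀ l, Pi i l = if l = k then 1 else 0)
    (Pt : Matrix (Fin K) (Fin K) ℝ)
    (hPt_symm : Pt.IsSymm)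
    (hPt_nonneg : ∀ k l, 0 ≤ Pt k l)
    (hPt_rank : Pt.rank = K)
    (hPt_le_one : ∀ k l, Pt k l ≤ 1)
    (hPt_max : ∃ k l, Pt k l = 1)
    (ρ τ : ℝ) (hρ0 : 0 < ρ) (hρ1 : ρ ≤ 1) (hτ : 0 ≤ τ)
    (Om : Matrix (Fin n) (Fin n) ℝ) (hOm : Om = Pi * (ρ • Pt) * Piᵀ)
    (deg : Fin n → ℝ) (hdeg : ∀ i, deg i = ∑ j, Om i j)
    (hpos : ∀ i, 0 < deg i + τ)
    (Ltau : Matrix (Fin n) (Fin n) ℝ)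
    (hLtau : Ltau = Matrix.diagonal (fun i => (Real.sqrt (deg i + τ))⁻¹) * Om *
      Matrix.diagonal (fun i => (Real.sqrt (deg i + τ))⁻¹))
    (Idx : Fin K → Fin n) (hIdx : Pi.submatrix Idx id = 1)
    (V : Matrix (Fin n) (Fin K) ℝ) (e : Fin K → ℝ)
    (hVorth : Vᵀ * V = 1) (he : ∀ k, e k ≠ 0)
    (hVE : Ltau = V * Matrix.diagonal e * Vᵀ)
    (hVrow : ∀ i, V i ≠ 0)
    (Vstar1 : Matrix (Fin n) (Fin K) ℝ)
    (hVstar1 : ∀ i k, Vstar1 i k = V i k / rowNorm V i)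
    (hVstar1unit : IsUnit (Vstar1.submatrix Idx id))
    (hGpos : ∀ k, 0 < (((Vstar1.submatrix Idx id) * (Vstar1.submatrix Idx id)ᵀ)⁻¹ *ᵥ
      (fun _ => (1 : ℝ))) k)
    (s b1 : ℝ)
    (hs : s = (fun _ => (1 : ℝ)) ⬝ᵥ
      (((Vstar1.submatrix Idx id) * (Vstar1.submatrix Idx id)ᵀ)⁻¹ *ᵥ (fun _ => (1 : ℝ))))
    (hb1 : b1 = (Real.sqrt s)⁻¹)
    (w1 : Fin K → ℝ)
    (hw1 : w1 = (b1⁻¹ * s⁻¹) • ((Vstar1.submatrix Idx id)ᵀ *ᵥ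
      (((Vstar1.submatrix Idx id) * (Vstar1.submatrix Idx id)ᵀ)⁻¹ *ᵥ (fun _ => (1 : ℝ))))) :
    ∀ i : Fin n,
      ((∃ k, Pi i k = 1) → Vstar1 i ⬝ᵥ w1 = b1) ∧
      (¬ (∃ k, Pi i k = 1) → Vstar1 i ⬝ᵥ w1 ≠ b1) :=
  stmt_13_general Pi hPi_nonneg hPi_rowsum Pt ρ τ Om hOm deg hpos Ltau hLtau Idx hIdx V e hVorth he
    hVE hVrow Vstar1 hVstar1 hVstar1unit s b1 hs hb1 w1 hw1
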